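/- arXiv:1905.06858 — 2 statements merged into one kernel-verified Lean document; each statement's English description precedes it below -/
import Mathlib

section
/- The Curry–Schoenberg B-spline M_i^{k+1}(x) = ((k+1)/(λ_{i+k+1} - λ_i)) B_i^{k+1}(x) integrates to 1 over ℝ, for any degree k ≥ 0 and strictly increasing knots. -/
/-!
Integrating `x ^ m` against the Cox–de Boor recursion expresses the moments of a B-spline of
degree `k + 1` through moments of degrees `m` and `m + 1` of B-splines of degree `k`. This closes
up into the moment formula
`∫ x ^ m B_i^{k+1} = m! k! / (m + k + 1)! · (t_{i+k+1} - t_i) · h_m(t_i, …, t_{i+k+1})`,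
with `h_m` the complete homogeneous symmetric polynomial: the induction step combines the two
recurrences of `h_m` (splitting off the last or the first knot) with the Beta-function identity
`B(m + 1, k + 1) - B(m + 2, k + 1) = B(m + 1, k + 2)`. The case `m = 0` is the theorem.
-/

open MeasureTheory Set

/-- Normalized B-spline of degree `k` (order `k+1`) with knot sequence `t`,
defined by the Cox–de Boor recursion. -/
noncomputable def Bspline (t : ℤ → ℝ) : ℕ → ℤ → ℝ → ℝ
  | 0, i, x => if x ∈ Set.Ico (t i) (t (i + 1)) then 1 else 0
  | k + 1, i, x =>
      ((x - t i) / (t (i + (k : ℤ) + 1) - t i)) * Bspline t k i x +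
        ((t (i + (k : ℤ) + 2) - x) / (t (i + (k : ℤ) + 2) - t (i + 1))) *
          Bspline t k (i + 1) x

open Nat

/-- `hsymmKnots t m i n` is the complete homogeneous symmetric polynomial of degree `m`
evaluated at the `n` knots `t i, …, t (i + n - 1)`. -/
def hsymmKnots (t : ℤ → ℝ) : ℕ → ℤ → ℕ → ℝ
  | 0, _, _ => 1
  | _ + 1, _, 0 => 0
  | m + 1, i, n + 1 => hsymmKnots t (m + 1) i n + t (i + n) * hsymmKnots t m i (n + 1)

namespace hsymmKnots

variable (t : ℤ → ℝ)

@[simp] theorem zero_left (i : ℤ) (n : ℕ) : hsymmKnots t 0 i n = 1 := by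
  rw [hsymmKnots]

theorem succ_succ (m n : ℕ) (i : ℤ) :
    hsymmKnots t (m + 1) i (n + 1) = hsymmKnots t (m + 1) i n + t (i + n) * hsymmKnots t m i (n + 1) := by
  rw [hsymmKnots]

@[simp] theorem one (m : ℕ) (i : ℤ) : hsymmKnots t m i 1 = t i ^ m := by
  induction m with
  | zero => simp
  | succ m ih => rw [succ_succ, ih, hsymmKnots]; simp only [Nat.cast_zero, add_zero, zero_add]; ring

theorem succ_succ_first (m n : ℕ) (i : ℤ) :
    hsymmKnots t (m + 1) i (n + 1) = hsymmKnots t (m + 1) (i + 1) n + t i * hsymmKnots t m i (n + 1) := by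
  induction m generalizing n with
  | zero =>
    induction n with
    | zero => simp [hsymmKnots]
    | succ n ihn =>
      rw [succ_succ, ihn, succ_succ, add_right_comm i 1]
      simp only [zero_left, Nat.cast_succ, ← add_assoc]
      ring
  | succ m ihm =>
    induction n with
    | zero => simp only [zero_add, one, hsymmKnots]; ring
    | succ n ihn =>
      rw [succ_succ, ihn, succ_succ _ _ _ (i + 1), add_right_comm i 1]
      have last := succ_succ t m (n + 1) i
      simp only [Nat.cast_succ, ← add_assoc] at *
      linear_combination t (i + n + 1) * ihm (n + 1) - t i * last

theorem sub_shift (m n : ℕ) (i : ℤ) :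
    hsymmKnots t (m + 1) i n - hsymmKnots t (m + 1) (i + 1) n
      = (t i - t (i + n)) * hsymmKnots t m i (n + 1) := by
  linear_combination succ_succ_first t m n i - succ_succ t m n i

theorem mul_sub_mul_shift (m n : ℕ) (i : ℤ) :
    t (i + n) * hsymmKnots t m (i + 1) n - t i * hsymmKnots t m i n
      = (t (i + n) - t i) * hsymmKnots t m i (n + 1) := by
  cases m with
  | zero => simp
  | succ m => linear_combination t i * succ_succ t m n i - t (i + n) * succ_succ_first t m n i

end hsymmKnots

/-- The Beta value `B(m + 1, k + 1) = m! k! / (m + k + 1)!`. -/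
noncomputable def momentCoeff (m k : ℕ) : ℝ :=
  (m ! * k ! : ℝ) / (m + k + 1)!

theorem momentCoeff_sub_momentCoeff_succ (m k : ℕ) :
    momentCoeff m k - momentCoeff (m + 1) k = momentCoeff m (k + 1) := by
  unfold momentCoeff
  rw [show m + 1 + k + 1 = m + k + 1 + 1 by omega, show m + (k + 1) + 1 = m + k + 1 + 1 by omega,
    Nat.factorial_succ (m + k + 1), Nat.factorial_succ m, Nat.factorial_succ k]
  push_cast
  field_simp
  ring

theorem momentCoeff_zero_left (k : ℕ) : momentCoeff 0 k = 1 / (k + 1) := by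
  rw [momentCoeff, zero_add, Nat.factorial_succ, Nat.factorial_zero]
  push_cast
  field_simp

namespace Bspline

section

variable (t : ℤ → ℝ)

theorem pow_mul_zero (m : ℕ) (i : ℤ) :
    (fun x => x ^ m * Bspline t 0 i x) = (Ico (t i) (t (i + 1))).indicator (· ^ m) := by
  ext x
  simp [Bspline, indicator_apply]

theorem pow_mul_succ (k m : ℕ) (i : ℤ) (x : ℝ) :
    x ^ m * Bspline t (k + 1) i x =
      (x ^ (m + 1) * Bspline t k i x - t i * (x ^ m * Bspline t k i x)) / (t (i + k + 1) - t i) +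
        (t (i + k + 2) * (x ^ m * Bspline t k (i + 1) x) - x ^ (m + 1) * Bspline t k (i + 1) x) /
          (t (i + k + 2) - t (i + 1)) := by
  rw [Bspline]
  ring

theorem integrable_pow_mul (k m : ℕ) (i : ℤ) : Integrable (fun x => x ^ m * Bspline t k i x) := by
  induction k generalizing m i with
  | zero =>
    rw [pow_mul_zero, integrable_indicator_iff measurableSet_Ico]
    exact (continuous_pow m).integrableOn_Icc.mono_set Ico_subset_Icc_self
  | succ k ih =>
    simp_rw [pow_mul_succ]
    exact (((ih (m + 1) i).sub ((ih m i).const_mul _)).div_const _).add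
      ((((ih m (i + 1)).const_mul _).sub (ih (m + 1) (i + 1))).div_const _)

theorem integral_pow_mul_zero {i : ℤ} (h : t i ≤ t (i + 1)) (m : ℕ) :
    ∫ x, x ^ m * Bspline t 0 i x = (t (i + 1) ^ (m + 1) - t i ^ (m + 1)) / (m + 1) := by
  rw [pow_mul_zero, integral_indicator measurableSet_Ico, integral_Ico_eq_integral_Ioo,
    ← integral_Ioc_eq_integral_Ioo, ← intervalIntegral.integral_of_le h, integral_pow]

theorem integral_pow_mul_succ (k m : ℕ) (i : ℤ) :
    ∫ x, x ^ m * Bspline t (k + 1) i x =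
      ((∫ x, x ^ (m + 1) * Bspline t k i x) - t i * ∫ x, x ^ m * Bspline t k i x) /
          (t (i + k + 1) - t i) +
        (t (i + k + 2) * (∫ x, x ^ m * Bspline t k (i + 1) x) -
            ∫ x, x ^ (m + 1) * Bspline t k (i + 1) x) / (t (i + k + 2) - t (i + 1)) := by
  have I := integrable_pow_mul t k
  simp_rw [pow_mul_succ]
  rw [integral_add ?sum₁ ?sum₂, integral_div, integral_div, integral_sub (I _ _) ?c₁,
    integral_sub ?c₂ (I _ _), integral_const_mul, integral_const_mul]
  case sum₁ => exact ((I _ _).sub ((I _ _).const_mul _)).div_const _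
  case sum₂ => exact (((I _ _).const_mul _).sub (I _ _)).div_const _
  all_goals exact (I _ _).const_mul _

end

theorem integral_pow_mul {t : ℤ → ℝ} (ht : StrictMono t) (k m : ℕ) (i : ℤ) :
    ∫ x, x ^ m * Bspline t k i x =
      momentCoeff m k * (t (i + k + 1) - t i) * hsymmKnots t m i (k + 2) := by
  induction k generalizing m i with
  | zero =>
    have h := hsymmKnots.sub_shift t m 1 i
    simp only [hsymmKnots.one, Nat.cast_one, Nat.reduceAdd] at h
    rw [integral_pow_mul_zero t (ht (lt_add_one i)).le, momentCoeff, Nat.factorial_zero,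
      Nat.factorial_succ]
    push_cast
    rw [add_zero]
    field_simp
    linear_combination -h
  | succ k ih =>
    have ha : t (i + k + 1) - t i ≠ 0 := sub_ne_zero.mpr (ht (by omega)).ne'
    have hb : t (i + k + 2) - t (i + 1) ≠ 0 := sub_ne_zero.mpr (ht (by omega)).ne'
    have hA := hsymmKnots.sub_shift t m (k + 2) i
    have hB := hsymmKnots.mul_sub_mul_shift t m (k + 2) i
    have hc := momentCoeff_sub_momentCoeff_succ m k
    have hi : i + 1 + k + 1 = i + k + 2 := by ring
    have hk : i + ((k + 1 : ℕ) : ℤ) + 1 = i + k + 2 := by push_cast; ring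
    simp only [Nat.cast_add, Nat.cast_ofNat, ← add_assoc] at hA hB
    rw [integral_pow_mul_succ, ih, ih, ih, ih, hi, hk]
    field_simp
    linear_combination momentCoeff (m + 1) k * hA + momentCoeff m k * hB +
      (t (i + k + 2) - t i) * hsymmKnots t m i (k + 3) * hc

end Bspline

/-- The Curry–Schoenberg B-spline M_i^{k+1} = ((k+1)/(λ_{i+k+1}-λ_i))·B_i^{k+1}
integrates to 1 over ℝ. -/
theorem CurrySchoenberg_integral_one (t : ℤ → ℝ) (ht : StrictMono t) (k : ℕ) (i : ℤ) :
    ∫ x : ℝ, ((k + 1 : ℝ) / (t (i + (k : ℤ) + 1) - t i)) * Bspline t k i x = 1 := by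
  have hd : t (i + k + 1) - t i ≠ 0 := sub_ne_zero.mpr (ht (by omega)).ne'
  have h := Bspline.integral_pow_mul ht k 0 i
  simp only [pow_zero, one_mul, hsymmKnots.zero_left, momentCoeff_zero_left] at h
  rw [integral_const_mul, h]
  field_simp
end

section
/- The functions Z_{-k}^{k+1}, ..., Z_{g-1}^{k+1} form a basis of the space Z_k^{Δλ}[a,b] of degree-k splines with zero integral: they are linearly independent elements of Z_k^{Δλ}[a,b], which has dimension g+k, so they span it. -/
/-!
The differences `M i - M (i+1)` of a linearly independent family are linearly independent: the
first one is not even in the span of `M 1, M 2, …`, which contains all the others. They lie in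
the kernel of `φ` because `φ` takes the same value on every `M i`, and that kernel is a
hyperplane, of dimension `g + k`, so they span it.
-/

open Module Submodule

theorem LinearIndependent.castSucc_sub_succ {K V : Type*} [DivisionRing K] [AddCommGroup V]
    [Module K V] : ∀ {n : ℕ} {v : Fin (n + 1) → V}, LinearIndependent K v →
      LinearIndependent K (fun i : Fin n => v i.castSucc - v i.succ)
  | 0, _, _ => linearIndependent_empty_type
  | n + 1, v, hv => by
    obtain ⟨hv_tail, hv_zero⟩ := linearIndependent_finSucc.mp hv
    refine linearIndependent_finSucc.mpr ⟨hv_tail.castSucc_sub_succ, fun h_mem => hv_zero ?_⟩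
    have h_le : span K (Set.range (Fin.tail fun i : Fin (n + 1) => v i.castSucc - v i.succ)) ≤
        span K (Set.range (Fin.tail v)) := by
      refine span_le.mpr ?_
      rintro _ ⟨i, rfl⟩
      exact sub_mem (subset_span ⟨i.castSucc, rfl⟩) (subset_span ⟨i.succ, rfl⟩)
    have h_one : Fin.tail v 0 ∈ span K (Set.range (Fin.tail v)) := subset_span ⟨0, rfl⟩
    simpa [Fin.tail] using add_mem (h_le h_mem) h_one

theorem span_range_castSucc_sub_succ_eq_ker {K V : Type*} [Field K] [AddCommGroup V]
    [Module K V] {n : ℕ} (hdim : finrank K V = n + 1) {v : Fin (n + 1) → V}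
    (hv : LinearIndependent K v) (φ : Dual K V) {c : K} (hc : c ≠ 0) (hφ : ∀ i, φ (v i) = c) :
    span K (Set.range fun i : Fin n => v i.castSucc - v i.succ) = LinearMap.ker φ := by
  have : FiniteDimensional K V := Module.finite_of_finrank_pos (by omega)
  have hφ_ne : φ ≠ 0 := fun h => hc (by simpa [h] using (hφ 0).symm)
  have h_le : span K (Set.range fun i : Fin n => v i.castSucc - v i.succ) ≤ LinearMap.ker φ := by
    refine span_le.mpr ?_
    rintro _ ⟨i, rfl⟩
    simp [hφ]
  refine eq_of_le_of_finrank_le h_le ?_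
  have h_ker := Dual.finrank_ker_add_one_of_ne_zero hφ_ne
  rw [finrank_span_eq_card hv.castSucc_sub_succ, Fintype.card_fin]
  omega

theorem ZBsplines_basis_general {V : Type*} [AddCommGroup V] [Module ℝ V]
    (g k : ℕ)
    (hdim : Module.finrank ℝ V = g + k + 1)
    (M : Fin (g + k + 1) → V) (hM : LinearIndependent ℝ M)
    (φ : V →ₗ[ℝ] ℝ) (hφ : ∀ i, φ (M i) = 1) :
    LinearIndependent ℝ (fun i : Fin (g + k) => M i.castSucc - M i.succ) ∧
      Submodule.span ℝ (Set.range fun i : Fin (g + k) => M i.castSucc - M i.succ) =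
        LinearMap.ker φ :=
  ⟨hM.castSucc_sub_succ, span_range_castSucc_sub_succ_eq_ker hdim hM φ one_ne_zero hφ⟩

/-- The ZB-splines Z_i = M_i - M_{i+1} form a basis of the space of splines with zero
integral: they are linearly independent and span the kernel of the integral functional φ,
where the M_i form a basis of the (g+k+1)-dimensional spline space with φ(M_i) = 1. -/
theorem ZBsplines_basis {V : Type*} [AddCommGroup V] [Module ℝ V]
    [FiniteDimensional ℝ V] (g k : ℕ)
    (hdim : Module.finrank ℝ V = g + k + 1)
    (M : Fin (g + k + 1) → V) (hM : LinearIndependent ℝ M)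
    (φ : V →ₗ[ℝ] ℝ) (hφ : ∀ i, φ (M i) = 1) :
    LinearIndependent ℝ (fun i : Fin (g + k) => M i.castSucc - M i.succ) ∧
      Submodule.span ℝ (Set.range fun i : Fin (g + k) => M i.castSucc - M i.succ) =
        LinearMap.ker φ :=
  ZBsplines_basis_general g k hdim M hM φ hφ
end
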